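/- arXiv:2404.08534 — 3 statements merged into one kernel-verified Lean document; each statement's English description precedes it below -/
import Mathlib

section
/- Let B → A be a homomorphism of commutative rings. For every A-module M, the relative projective dimension satisfies pd_{(A,B)} M ≤ pd_{(A⊗_B A, A)} A, where A⊗_B A is regarded as an A-algebra via a ↦ 1⊗a and A is an (A⊗_B A)-module via the multiplication map μ(a⊗a') = aa'. Consequently gldim(A,B) ≤ cdim(A,B). -/
open TensorProduct

section RelDefs

variable (S R : Type) [CommRing S] [CommRing R] [Algebra S R]

/-- A bundled module over the ring extension `S → R`. -/
structure RelModule where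
  carrier : Type
  [isAddCommGroup : AddCommGroup carrier]
  [isModuleBase : Module S carrier]
  [isModuleTop : Module R carrier]
  [isTower : IsScalarTower S R carrier]

attribute [instance] RelModule.isAddCommGroup RelModule.isModuleBase
  RelModule.isModuleTop RelModule.isTower

/-- The multiplication map `R ⊗[S] M → M`, `r ⊗ m ↦ r • m`. -/
noncomputable def relMul (M : Type) [AddCommGroup M] [Module S M] [Module R M]
    [IsScalarTower S R M] : R ⊗[S] M →ₗ[R] M :=
  LinearMap.liftBaseChange R LinearMap.id

/-- `M` is relatively `S`-projective (i.e. `(R,S)`-projective): the multiplication map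
`R ⊗[S] M → M` is a split epimorphism of `R`-modules. -/
noncomputable def IsRelProjective (M : Type) [AddCommGroup M] [Module S M] [Module R M]
    [IsScalarTower S R M] : Prop :=
  ∃ s : M →ₗ[R] R ⊗[S] M, (relMul S R M).comp s = LinearMap.id

/-- `P, f, g` form an `(R,S)`-exact resolution of `M` by `(R,S)`-projective modules:
`⋯ → P 1 → P 0 → M → 0` is exact, the kernel of each map is a direct `S`-module summand
of its domain, and each `P i` is `(R,S)`-projective. -/
noncomputable def IsRelResolution (M : RelModule S R) (P : ℕ → RelModule S R)
    (f : ∀ i, (P (i + 1)).carrier →ₗ[R] (P i).carrier)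
    (g : (P 0).carrier →ₗ[R] M.carrier) : Prop :=
  (∀ i, IsRelProjective S R (P i).carrier) ∧
  Function.Surjective g ∧
  Function.Exact (f 0) g ∧
  (∀ i, Function.Exact (f (i + 1)) (f i)) ∧
  (∃ q, IsCompl ((LinearMap.ker g).restrictScalars S) q) ∧
  (∀ i, ∃ q, IsCompl ((LinearMap.ker (f i)).restrictScalars S) q)

/-- The relative projective dimension `pd_{(R,S)} M`: the least length of an `(R,S)`-exact
resolution of `M` by `(R,S)`-projectives (`⊤` if there is none). -/
noncomputable def relPd (M : RelModule S R) : ℕ∞ :=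
  sInf {n : ℕ∞ | ∃ k : ℕ, n = (k : ℕ∞) ∧
    ∃ (P : ℕ → RelModule S R) (f : ∀ i, (P (i + 1)).carrier →ₗ[R] (P i).carrier)
      (g : (P 0).carrier →ₗ[R] M.carrier),
      IsRelResolution S R M P f g ∧ ∀ i, k ≤ i → Subsingleton (P (i + 1)).carrier}

/-- The relative global dimension `gldim(R,S)`: the supremum of the relative projective
dimensions of all `R`-modules. -/
noncomputable def relGldim : ℕ∞ := ⨆ M : RelModule S R, relPd S R M

end RelDefs

section MulEnvSec

variable (B A : Type) [CommRing B] [CommRing A] [Algebra B A]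

/-- The enveloping algebra `A^e = A ⊗[B] A`, as a type synonym carrying the `A`-algebra
structure `a ↦ 1 ⊗ a` and acting on `A` through the multiplication map `μ(a ⊗ a') = a a'`. -/
def MulEnv : Type := A ⊗[B] A

noncomputable instance : CommRing (MulEnv B A) := inferInstanceAs (CommRing (A ⊗[B] A))

noncomputable instance : Algebra B (MulEnv B A) := inferInstanceAs (Algebra B (A ⊗[B] A))

/-- `A ⊗[B] A` is an `A`-algebra via `a ↦ 1 ⊗ a`. -/
noncomputable instance : Algebra A (MulEnv B A) :=
  ((Algebra.TensorProduct.includeRight : A →ₐ[B] A ⊗[B] A).toRingHom :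
    A →+* MulEnv B A).toAlgebra

/-- `A` is an `A ⊗[B] A`-module via the multiplication map `μ(a ⊗ a') = a a'`. -/
noncomputable instance : Algebra (MulEnv B A) A :=
  (((Algebra.TensorProduct.lmul' B (S := A)).toRingHom :
    A ⊗[B] A →+* A) : MulEnv B A →+* A).toAlgebra

noncomputable instance : IsScalarTower A (MulEnv B A) A :=
  IsScalarTower.of_algebraMap_eq fun x => by
    show x = (Algebra.TensorProduct.lmul' B (S := A)).toRingHom
      ((Algebra.TensorProduct.includeRight : A →ₐ[B] A ⊗[B] A).toRingHom x)
    simp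

/-- The relative cohomological dimension `cdim(A,B) = pd_{(A ⊗_B A, A)} A`, where
`A ⊗[B] A` is an `A`-algebra via `a ↦ 1 ⊗ a` and `A` is an `(A ⊗[B] A)`-module via the
multiplication map `μ`. -/
noncomputable def relCdim : ℕ∞ := relPd A (MulEnv B A) (RelModule.mk A)

end MulEnvSec



section Generic
variable {S R : Type} [CommRing S] [CommRing R] [Algebra S R]

/-- Lift a map `e : Z → Y` landing in the range of `f : X → Y` through `f`,
`S`-linearly, provided `ker f` has an `S`-complement. -/
lemma rel_split_lift {X Y Z : Type}
    [AddCommGroup X] [Module S X] [Module R X] [IsScalarTower S R X]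
    [AddCommGroup Y] [Module S Y] [Module R Y] [IsScalarTower S R Y]
    [AddCommGroup Z] [Module S Z]
    (f : X →ₗ[R] Y) (q : Submodule S X)
    (hc : IsCompl ((LinearMap.ker f).restrictScalars S) q)
    (e : Z →ₗ[S] Y) (he : ∀ z, e z ∈ LinearMap.range f) :
    ∃ h : Z →ₗ[S] X, ∀ z, f (h z) = e z := by
  set fS : X →ₗ[S] Y := f.restrictScalars S with hfS
  set φ : q →ₗ[S] Y := fS.comp q.subtype with hφ
  have hinj : Function.Injective φ := by
    intro x y hxy
    have : (x : X) - y ∈ (LinearMap.ker f).restrictScalars S ⊓ q := by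
      constructor
      · have hfe : f (x : X) = f (y : X) := hxy
        show (x:X) - y ∈ LinearMap.ker f
        rw [LinearMap.mem_ker, map_sub, hfe, sub_self]
      · exact q.sub_mem x.2 y.2
    rw [hc.inf_eq_bot] at this
    have := Submodule.mem_bot (R := S) |>.mp this
    ext
    exact sub_eq_zero.mp this
  have hrange : ∀ z, e z ∈ LinearMap.range φ := by
    intro z
    obtain ⟨x, hx⟩ := he z
    have hxmem : x ∈ (LinearMap.ker f).restrictScalars S ⊔ q := by
      rw [hc.sup_eq_top]; trivial
    obtain ⟨k, hk, c, hcq, rfl⟩ := Submodule.mem_sup.mp hxmem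
    refine ⟨⟨c, hcq⟩, ?_⟩
    have hk0 : f k = 0 := hk
    simpa [φ, hfS, map_add, hk0] using hx
  let e' : Z →ₗ[S] LinearMap.range φ := e.codRestrict _ hrange
  let ψ : q ≃ₗ[S] LinearMap.range φ := LinearEquiv.ofInjective φ hinj
  refine ⟨q.subtype.comp ((ψ.symm : LinearMap.range φ →ₗ[S] q).comp e'), fun z => ?_⟩
  have : φ (ψ.symm (e' z)) = e z := by
    have h1 : ψ (ψ.symm (e' z)) = e' z := ψ.apply_symm_apply _
    have h2 : (ψ (ψ.symm (e' z)) : Y) = φ (ψ.symm (e' z)) := rfl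
    have h3 : ((e' z : LinearMap.range φ) : Y) = e z := rfl
    rw [← h2, h1, h3]
  simpa [φ, hfS] using this

end Generic

section Homotopy
variable {S R : Type} [CommRing S] [CommRing R] [Algebra S R]
variable {M : RelModule S R} {P : ℕ → RelModule S R}
variable {f : ∀ i, (P (i + 1)).carrier →ₗ[R] (P i).carrier}
variable {g : (P 0).carrier →ₗ[R] M.carrier}

/-- The type of the data constructed at stage `i` of the homotopy. -/
def HtpyData (f : ∀ i, (P (i + 1)).carrier →ₗ[R] (P i).carrier) (i : ℕ) : Type :=
  Σ' (hi : (P i).carrier →ₗ[S] (P (i + 1)).carrier)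
     (pi : (P i).carrier →ₗ[S] (P i).carrier),
    (∀ x, f i (hi x) = x - pi x) ∧ (∀ x, pi (f i x) = 0)

noncomputable def htpyBase (hex0 : Function.Exact (f 0) g)
    (q0 : Submodule S (P 1).carrier)
    (hcq0 : IsCompl ((LinearMap.ker (f 0)).restrictScalars S) q0)
    (h' : M.carrier →ₗ[S] (P 0).carrier) (hh' : ∀ m, g (h' m) = m) :
    HtpyData f 0 := by
  set p0 : (P 0).carrier →ₗ[S] (P 0).carrier := h'.comp (g.restrictScalars S) with hp0
  set e0 : (P 0).carrier →ₗ[S] (P 0).carrier := LinearMap.id - p0 with he0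
  have hmem : ∀ x, e0 x ∈ LinearMap.range (f 0) := by
    intro x
    have : g (e0 x) = 0 := by
      simp [he0, hp0, hh' (g x)]
    obtain ⟨y, hy⟩ := (hex0 _).mp this
    exact ⟨y, hy⟩
  have hsl := rel_split_lift (f 0) q0 hcq0 e0 hmem
  obtain ⟨h0, hh0⟩ : {h0 : (P 0).carrier →ₗ[S] (P 1).carrier // ∀ z, f 0 (h0 z) = e0 z} :=
    ⟨hsl.choose, hsl.choose_spec⟩
  exact ⟨h0, p0, fun x => by simpa [he0] using hh0 x,
    fun x => by simp [hp0, hex0.apply_apply_eq_zero x]⟩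

noncomputable def htpyStep (hex : ∀ i, Function.Exact (f (i + 1)) (f i))
    (q : ∀ i, Submodule S (P (i + 1)).carrier)
    (hcq : ∀ i, IsCompl ((LinearMap.ker (f i)).restrictScalars S) (q i))
    (i : ℕ) (prev : HtpyData f i) : HtpyData f (i + 1) := by
  set p' : (P (i + 1)).carrier →ₗ[S] (P (i + 1)).carrier :=
    prev.1.comp ((f i).restrictScalars S) with hp'
  set e' : (P (i + 1)).carrier →ₗ[S] (P (i + 1)).carrier := LinearMap.id - p' with he'
  have hmem : ∀ x, e' x ∈ LinearMap.range (f (i + 1)) := by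
    intro x
    have : f i (e' x) = 0 := by
      have h1 := prev.2.2.1 (f i x)
      have h2 := prev.2.2.2 x
      simp only [he', hp', LinearMap.sub_apply, LinearMap.id_apply, map_sub, LinearMap.coe_comp,
        Function.comp_apply, LinearMap.coe_restrictScalars] at h1 h2 ⊢
      rw [h1, h2]
      abel
    obtain ⟨y, hy⟩ := ((hex i) _).mp this
    exact ⟨y, hy⟩
  have hsl := rel_split_lift (f (i + 1)) (q (i + 1)) (hcq (i + 1)) e' hmem
  obtain ⟨hn, hhn⟩ :
      {hn : (P (i + 1)).carrier →ₗ[S] (P (i + 2)).carrier // ∀ z, f (i + 1) (hn z) = e' z} :=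
    ⟨hsl.choose, hsl.choose_spec⟩
  refine ⟨hn, p', fun x => by simpa [he'] using hhn x, fun x => ?_⟩
  have hz : f i (f (i + 1) x) = 0 := (hex i).apply_apply_eq_zero x
  simp [hp', hz]

noncomputable def htpyAux (hex0 : Function.Exact (f 0) g)
    (hex : ∀ i, Function.Exact (f (i + 1)) (f i))
    (q : ∀ i, Submodule S (P (i + 1)).carrier)
    (hcq : ∀ i, IsCompl ((LinearMap.ker (f i)).restrictScalars S) (q i))
    (h' : M.carrier →ₗ[S] (P 0).carrier) (hh' : ∀ m, g (h' m) = m) :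
    ∀ i, HtpyData f i := fun i =>
  Nat.rec (htpyBase hex0 (q 0) (hcq 0) h' hh') (fun j prev => htpyStep hex q hcq j prev) i

lemma htpyAux_zero_snd (hex0 : Function.Exact (f 0) g)
    (hex : ∀ i, Function.Exact (f (i + 1)) (f i))
    (q : ∀ i, Submodule S (P (i + 1)).carrier)
    (hcq : ∀ i, IsCompl ((LinearMap.ker (f i)).restrictScalars S) (q i))
    (h' : M.carrier →ₗ[S] (P 0).carrier) (hh' : ∀ m, g (h' m) = m) :
    (htpyAux hex0 hex q hcq h' hh' 0).2.1 = h'.comp (g.restrictScalars S) := rfl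

lemma htpyAux_succ_snd (hex0 : Function.Exact (f 0) g)
    (hex : ∀ i, Function.Exact (f (i + 1)) (f i))
    (q : ∀ i, Submodule S (P (i + 1)).carrier)
    (hcq : ∀ i, IsCompl ((LinearMap.ker (f i)).restrictScalars S) (q i))
    (h' : M.carrier →ₗ[S] (P 0).carrier) (hh' : ∀ m, g (h' m) = m) (i : ℕ) :
    (htpyAux hex0 hex q hcq h' hh' (i + 1)).2.1 =
      (htpyAux hex0 hex q hcq h' hh' i).1.comp ((f i).restrictScalars S) := rfl

/-- Extract an `S`-linear contracting homotopy from an `(R,S)`-split resolution. -/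
lemma exists_homotopy (hres : IsRelResolution S R M P f g) :
    ∃ (h' : M.carrier →ₗ[S] (P 0).carrier)
      (h : ∀ i, (P i).carrier →ₗ[S] (P (i + 1)).carrier),
      (∀ m, g (h' m) = m) ∧
      (∀ x, f 0 (h 0 x) + h' (g x) = x) ∧
      (∀ i x, f (i + 1) (h (i + 1) x) + h i (f i x) = x) := by
  obtain ⟨-, hsurj, hex0, hex, ⟨qg, hqg⟩, hq⟩ := hres
  choose q hcq using hq
  obtain ⟨h', hh'⟩ := rel_split_lift g qg hqg (LinearMap.id : M.carrier →ₗ[S] M.carrier)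
    (fun z => hsurj z)
  have hh'' : ∀ m, g (h' m) = m := fun m => hh' m
  set K := htpyAux hex0 hex q hcq h' hh'' with hK
  refine ⟨h', fun i => (K i).1, hh'', fun x => ?_, fun i x => ?_⟩
  · have h1 := (K 0).2.2.1 x
    have h2 : (K 0).2.1 x = h' (g x) := by
      rw [hK, htpyAux_zero_snd]; rfl
    rw [h1, h2]
    abel
  · have h1 := (K (i + 1)).2.2.1 x
    have h2 : (K (i + 1)).2.1 x = (K i).1 (f i x) := by
      rw [hK, htpyAux_succ_snd]; rfl
    rw [h1, h2]
    abel

end Homotopy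


section FromHomotopy
variable {S R : Type} [CommRing S] [CommRing R] [Algebra S R]
variable {M : RelModule S R} {P : ℕ → RelModule S R}
variable {f : ∀ i, (P (i + 1)).carrier →ₗ[R] (P i).carrier}
variable {g : (P 0).carrier →ₗ[R] M.carrier}

/-- Build an `(R,S)`-resolution from a complex of `(R,S)`-projectives together with an
`S`-linear contracting homotopy. -/
lemma isRelResolution_of_homotopy
    (hproj : ∀ i, IsRelProjective S R (P i).carrier)
    (hc0 : ∀ x, g (f 0 x) = 0) (hc : ∀ i x, f i (f (i + 1) x) = 0)
    (h' : M.carrier →ₗ[S] (P 0).carrier)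
    (h : ∀ i, (P i).carrier →ₗ[S] (P (i + 1)).carrier)
    (hh' : ∀ m, g (h' m) = m)
    (hh0 : ∀ x, f 0 (h 0 x) + h' (g x) = x)
    (hh : ∀ i x, f (i + 1) (h (i + 1) x) + h i (f i x) = x) :
    IsRelResolution S R M P f g := by
  have hretr : ∀ i x, f i (h i (f i x)) = f i x := by
    intro i
    match i with
    | 0 =>
      intro x
      have := hh0 (f 0 x)
      rw [hc0 x, map_zero, add_zero] at this
      exact this
    | (j + 1) =>
      intro x
      have := hh (j) (f (j + 1) x)
      rw [hc j x, map_zero, add_zero] at this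
      exact this
  refine ⟨hproj, fun m => ⟨h' m, hh' m⟩, ?_, ?_, ?_, ?_⟩
  · -- exactness at `P 0`
    intro y
    constructor
    · intro hy
      refine ⟨h 0 y, ?_⟩
      have := hh0 y
      rw [hy, map_zero, add_zero] at this
      exact this
    · rintro ⟨x, rfl⟩
      exact hc0 x
  · -- exactness at `P (i+1)`
    intro i y
    constructor
    · intro hy
      refine ⟨h (i + 1) y, ?_⟩
      have := hh i y
      rw [hy, map_zero, add_zero] at this
      exact this
    · rintro ⟨x, rfl⟩
      exact hc i x
  · -- complement for `ker g`
    set e : (P 0).carrier →ₗ[S] (P 0).carrier :=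
      LinearMap.id - h'.comp (g.restrictScalars S) with he
    have hmem : ∀ x, e x ∈ (LinearMap.ker g).restrictScalars S := by
      intro x
      show g (e x) = 0
      simp [he, hh' (g x)]
    set π : (P 0).carrier →ₗ[S] ((LinearMap.ker g).restrictScalars S) :=
      e.codRestrict _ hmem with hπ
    have hfix : ∀ x : (LinearMap.ker g).restrictScalars S, π x = x := by
      intro x
      have hx : g (x : (P 0).carrier) = 0 := x.2
      ext
      show e (x : (P 0).carrier) = (x : (P 0).carrier)
      simp [he, hx]
    exact ⟨LinearMap.ker π, LinearMap.isCompl_of_proj hfix⟩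
  · -- complement for `ker (f i)`
    intro i
    set e : (P (i + 1)).carrier →ₗ[S] (P (i + 1)).carrier :=
      LinearMap.id - (h i).comp ((f i).restrictScalars S) with he
    have hmem : ∀ x, e x ∈ (LinearMap.ker (f i)).restrictScalars S := by
      intro x
      show f i (e x) = 0
      simp only [he, LinearMap.sub_apply, LinearMap.id_apply, map_sub, LinearMap.coe_comp,
        Function.comp_apply, LinearMap.coe_restrictScalars]
      rw [hretr i x, sub_self]
    set π : (P (i + 1)).carrier →ₗ[S] ((LinearMap.ker (f i)).restrictScalars S) :=
      e.codRestrict _ hmem with hπ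
    have hfix : ∀ x : (LinearMap.ker (f i)).restrictScalars S, π x = x := by
      intro x
      have hx : f i (x : (P (i + 1)).carrier) = 0 := x.2
      ext
      show e (x : (P (i + 1)).carrier) = (x : (P (i + 1)).carrier)
      simp [he, hx]
    exact ⟨LinearMap.ker π, LinearMap.isCompl_of_proj hfix⟩

end FromHomotopy

section TensorConstr

variable (B A : Type) [CommRing B] [CommRing A] [Algebra B A]

/-- The ring map `A →+* A ⊗[B] A`, `a ↦ a ⊗ 1`. -/
noncomputable def lhom : A →+* MulEnv B A :=
  ((Algebra.TensorProduct.includeLeftRingHom : A →+* A ⊗[B] A) : A →+* MulEnv B A)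

lemma lhom_algebraMap (b : B) :
    lhom B A (algebraMap B A b) = algebraMap A (MulEnv B A) (algebraMap B A b) := by
  show (algebraMap B A b ⊗ₜ[B] (1 : A) : A ⊗[B] A) = (1 : A) ⊗ₜ[B] algebraMap B A b
  rw [Algebra.algebraMap_eq_smul_one (R := B) (A := A) b, smul_tmul]

lemma lhom_smul_A (a y : A) : lhom B A a • y = a * y := by
  rw [Algebra.smul_def]
  show (Algebra.TensorProduct.lmul' B (S := A)) (a ⊗ₜ[B] 1) * y = a * y
  rw [Algebra.TensorProduct.lmul'_apply_tmul]
  ring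

lemma lhom_base_smul {X : Type} [AddCommGroup X] [Module A X] [Module (MulEnv B A) X]
    [IsScalarTower A (MulEnv B A) X] (b : B) (x : X) :
    lhom B A (algebraMap B A b) • x = algebraMap B A b • x := by
  rw [lhom_algebraMap, algebraMap_smul]

variable (M : RelModule B A)

/-- The underlying type of `N ⊗[A] M` for `N` a module over `(A ⊗[B] A, A)`,
as a module over `(A, B)` with `A` acting through the left tensor factor. -/
def Syn (N : RelModule A (MulEnv B A)) : Type := N.carrier ⊗[A] M.carrier

variable (N : RelModule A (MulEnv B A))

noncomputable instance : AddCommGroup (Syn B A M N) :=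
  inferInstanceAs (AddCommGroup (N.carrier ⊗[A] M.carrier))

noncomputable instance synE : Module (MulEnv B A) (Syn B A M N) :=
  inferInstanceAs (Module (MulEnv B A) (N.carrier ⊗[A] M.carrier))

noncomputable instance synTop : Module A (Syn B A M N) :=
  Module.compHom _ (lhom B A)

noncomputable instance synBase : Module B (Syn B A M N) :=
  Module.compHom _ ((lhom B A).comp (algebraMap B A))

instance : IsScalarTower B A (Syn B A M N) :=
  IsScalarTower.of_algebraMap_smul fun _ _ => rfl

/-- Pure tensors in `Syn`. -/
noncomputable def sy (p : N.carrier) (m : M.carrier) : Syn B A M N := p ⊗ₜ[A] m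

variable {B A M N}

lemma syn_induction {motive : Syn B A M N → Prop} (zero : motive 0)
    (tmul : ∀ p m, motive (sy B A M N p m))
    (add : ∀ x y, motive x → motive y → motive (x + y)) : ∀ x, motive x := fun x =>
  TensorProduct.induction_on (motive := motive) x zero tmul add

lemma smul_sy (e : MulEnv B A) (p : N.carrier) (m : M.carrier) :
    e • sy B A M N p m = sy B A M N (e • p) m := rfl

lemma top_smul_def (a : A) (x : Syn B A M N) : a • x = lhom B A a • x := rfl

lemma base_smul_def (b : B) (x : Syn B A M N) :
    b • x = lhom B A (algebraMap B A b) • x := rfl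

lemma sy_smul_right (a : A) (p : N.carrier) (m : M.carrier) :
    sy B A M N p (a • m) = sy B A M N (a • p) m := by
  show p ⊗ₜ[A] (a • m) = (a • p) ⊗ₜ[A] m
  rw [TensorProduct.tmul_smul, TensorProduct.smul_tmul']

lemma sy_add_left (p q : N.carrier) (m : M.carrier) :
    sy B A M N (p + q) m = sy B A M N p m + sy B A M N q m := by
  show (p + q) ⊗ₜ[A] m = p ⊗ₜ[A] m + q ⊗ₜ[A] m
  rw [TensorProduct.add_tmul]

lemma sy_add_right (p : N.carrier) (m m' : M.carrier) :
    sy B A M N p (m + m') = sy B A M N p m + sy B A M N p m' := by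
  show p ⊗ₜ[A] (m + m') = p ⊗ₜ[A] m + p ⊗ₜ[A] m'
  rw [TensorProduct.tmul_add]

end TensorConstr

section TensorMaps

variable {B A : Type} [CommRing B] [CommRing A] [Algebra B A]
variable {M : RelModule B A} {N N' : RelModule A (MulEnv B A)}

/-- On `Syn`, the `B`-action agrees with the natural (right-factor) `A`-action
through `algebraMap B A`. -/
lemma natB (b : B) (x : N.carrier ⊗[A] M.carrier) :
    lhom B A (algebraMap B A b) • x = algebraMap B A b • x := by
  induction x with
  | zero => simp
  | tmul p m =>
    show (lhom B A (algebraMap B A b) • p) ⊗ₜ[A] m = _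
    rw [lhom_base_smul, TensorProduct.smul_tmul']
  | add x y hx hy => rw [smul_add, smul_add, hx, hy]

/-- An `(A ⊗[B] A)`-linear map induces an `A`-linear map on `Syn`. -/
noncomputable def tmap (φ : N.carrier →ₗ[MulEnv B A] N'.carrier) :
    Syn B A M N →ₗ[A] Syn B A M N' where
  toFun := fun x =>
    (TensorProduct.AlgebraTensorModule.map φ (LinearMap.id (R := A) (M := M.carrier))) x
  map_add' := fun x y => map_add _ x y
  map_smul' := fun a x =>
    (TensorProduct.AlgebraTensorModule.map φ LinearMap.id).map_smul (lhom B A a) x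

lemma tmap_sy (φ : N.carrier →ₗ[MulEnv B A] N'.carrier) (p : N.carrier) (m : M.carrier) :
    tmap (M := M) φ (sy B A M N p m) = sy B A M N' (φ p) m := rfl

/-- An `A`-linear (for the right-factor action) map induces a `B`-linear map on `Syn`. -/
noncomputable def bmap (φ : N.carrier →ₗ[A] N'.carrier) :
    Syn B A M N →ₗ[B] Syn B A M N' where
  toFun := fun x => (LinearMap.rTensor M.carrier φ) x
  map_add' := fun x y => map_add _ x y
  map_smul' := fun b x => by
    have key : ∀ y : N.carrier ⊗[A] M.carrier,
        LinearMap.rTensor M.carrier φ (lhom B A (algebraMap B A b) • y) =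
          lhom B A (algebraMap B A b) • LinearMap.rTensor M.carrier φ y := by
      intro y
      rw [natB, natB, LinearMap.map_smul]
    exact key x

lemma bmap_sy (φ : N.carrier →ₗ[A] N'.carrier) (p : N.carrier) (m : M.carrier) :
    bmap (M := M) φ (sy B A M N p m) = sy B A M N' (φ p) m := rfl

/-- An `(A ⊗[B] A)`-linear map `N → A` induces an `A`-linear map `Syn N → M`. -/
noncomputable def tgmap (γ : N.carrier →ₗ[MulEnv B A] A) :
    Syn B A M N →ₗ[A] M.carrier where
  toFun := fun x =>
    TensorProduct.lift ((LinearMap.lsmul A M.carrier).comp (γ.restrictScalars A)) x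
  map_add' := fun x y => map_add _ x y
  map_smul' := fun a x => by
    have key : ∀ y : N.carrier ⊗[A] M.carrier,
        TensorProduct.lift ((LinearMap.lsmul A M.carrier).comp (γ.restrictScalars A))
            (lhom B A a • y) =
          a • TensorProduct.lift ((LinearMap.lsmul A M.carrier).comp (γ.restrictScalars A)) y := by
      intro y
      induction y with
      | zero => simp
      | tmul p m =>
        show TensorProduct.lift _ ((lhom B A a • p) ⊗ₜ[A] m) = _
        rw [TensorProduct.lift.tmul, TensorProduct.lift.tmul]
        simp only [LinearMap.coe_comp, Function.comp_apply, LinearMap.coe_restrictScalars,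
          LinearMap.lsmul_apply, LinearMap.map_smul]
        rw [lhom_smul_A, mul_smul]
      | add x y hx hy => rw [smul_add, map_add, hx, hy, map_add, smul_add]
    exact key x

lemma tgmap_sy (γ : N.carrier →ₗ[MulEnv B A] A) (p : N.carrier) (m : M.carrier) :
    tgmap (M := M) γ (sy B A M N p m) = γ p • m := rfl

/-- `m ↦ η 1 ⊗ m`, the base homotopy on `Syn`. -/
noncomputable def thbase (η : A →ₗ[A] N.carrier) : M.carrier →ₗ[B] Syn B A M N where
  toFun := fun m => sy B A M N (η 1) m
  map_add' := fun m m' => sy_add_right _ _ _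
  map_smul' := fun b m => by
    show sy B A M N (η 1) (b • m) = b • sy B A M N (η 1) m
    have h1 : b • sy B A M N (η 1) m =
        sy B A M N (lhom B A (algebraMap B A b) • η 1) m := rfl
    rw [h1, lhom_base_smul]
    have hb : b • m = algebraMap B A b • m := (algebraMap_smul A b m).symm
    rw [hb, sy_smul_right]

lemma thbase_apply (η : A →ₗ[A] N.carrier) (m : M.carrier) :
    thbase (M := M) η m = sy B A M N (η 1) m := rfl

end TensorMaps

section Projectivity

variable {B A : Type} [CommRing B] [CommRing A] [Algebra B A]
variable (M : RelModule B A) (N : RelModule A (MulEnv B A))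

lemma sy_zero_left (m : M.carrier) : sy B A M N 0 m = 0 := by
  show (0 : N.carrier) ⊗ₜ[A] m = 0
  exact TensorProduct.zero_tmul _ m

/-- `(a, a', p, m) ↦ a ⊗ (a'•p ⊗ m)` as a bundled additive map in `p, m`. -/
noncomputable def projF3 (a a' : A) : N.carrier →+ M.carrier →+ (A ⊗[B] Syn B A M N) :=
  AddMonoidHom.mk'
    (fun p => AddMonoidHom.mk' (fun m => a ⊗ₜ[B] sy B A M N (a' • p) m)
      (fun m m' => by
        show a ⊗ₜ[B] sy B A M N (a' • p) (m + m') = _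
        rw [sy_add_right, TensorProduct.tmul_add]))
    (fun p p' => by
      ext m
      show a ⊗ₜ[B] sy B A M N (a' • (p + p')) m = _
      rw [smul_add, sy_add_left, TensorProduct.tmul_add]
      rfl)

/-- The previous map, bundled additively in `a, a'`. -/
noncomputable def projF2 : A →+ A →+ (N.carrier →+ M.carrier →+ (A ⊗[B] Syn B A M N)) :=
  AddMonoidHom.mk'
    (fun a => AddMonoidHom.mk' (fun a' => projF3 M N a a')
      (fun a' a'' => by
        ext p m
        show a ⊗ₜ[B] sy B A M N ((a' + a'') • p) m = _
        rw [add_smul, sy_add_left, TensorProduct.tmul_add]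
        rfl))
    (fun a a' => by
      ext a'' p m
      show (a + a') ⊗ₜ[B] sy B A M N (a'' • p) m = _
      rw [TensorProduct.add_tmul]
      rfl)

lemma projF2_apply (a a' : A) (p : N.carrier) (m : M.carrier) :
    projF2 M N a a' p m = a ⊗ₜ[B] sy B A M N (a' • p) m := rfl

lemma projF2_balance (b : B) (a a' : A) : projF2 M N (b • a) a' = projF2 M N a (b • a') := by
  ext p m
  rw [projF2_apply, projF2_apply]
  have h1 : (b • a') • p = algebraMap B A b • (a' • p) := by
    rw [Algebra.smul_def, mul_smul]
  rw [h1]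
  have h2 : sy B A M N (algebraMap B A b • (a' • p)) m = b • sy B A M N (a' • p) m := by
    rw [base_smul_def]; erw [natB]
    rfl
  rw [h2, TensorProduct.tmul_smul, TensorProduct.smul_tmul']

/-- The map `A ⊗[B] A →+ (N →+ M →+ A ⊗[B] Syn)`, `(a ⊗ a') ↦ (p ↦ m ↦ a ⊗ (a'•p ⊗ m))`. -/
noncomputable def projF1 : (MulEnv B A) →+ (N.carrier →+ M.carrier →+ (A ⊗[B] Syn B A M N)) :=
  ((TensorProduct.liftAddHom (projF2 M N) (projF2_balance M N) :
    (A ⊗[B] A) →+ (N.carrier →+ M.carrier →+ (A ⊗[B] Syn B A M N))) :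
    (MulEnv B A) →+ (N.carrier →+ M.carrier →+ (A ⊗[B] Syn B A M N)))

lemma projF1_tmul (a a' : A) (p : N.carrier) (m : M.carrier) :
    projF1 M N (a ⊗ₜ[B] a') p m = a ⊗ₜ[B] sy B A M N (a' • p) m := by
  show (TensorProduct.liftAddHom (projF2 M N) (projF2_balance M N)) (a ⊗ₜ[B] a') p m = _
  rw [TensorProduct.liftAddHom_tmul]
  rfl

lemma projF1_mul_right (c : A) (e : A ⊗[B] A) (p : N.carrier) (m : M.carrier) :
    projF1 M N (e * (1 ⊗ₜ[B] c)) p m = projF1 M N e p (c • m) := by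
  induction e with
  | zero =>
    erw [zero_mul]
    change projF1 M N (0 : MulEnv B A) p m = projF1 M N (0 : MulEnv B A) p (c • m)
    simp only [map_zero, AddMonoidHom.zero_apply]
  | tmul a a' =>
    erw [Algebra.TensorProduct.tmul_mul_tmul, mul_one, projF1_tmul, projF1_tmul,
      mul_smul, smul_comm, ← sy_smul_right]
  | add x y hx hy =>
    erw [add_mul]
    erw [map_add, map_add]
    simp only [AddMonoidHom.add_apply]
    erw [hx, hy]

lemma projF1_mul_left (a : A) (e : A ⊗[B] A) (p : N.carrier) (m : M.carrier) :
    projF1 M N ((a ⊗ₜ[B] 1) * e) p m = a • projF1 M N e p m := by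
  induction e with
  | zero =>
    erw [mul_zero]
    change projF1 M N (0 : MulEnv B A) p m = a • projF1 M N (0 : MulEnv B A) p m
    simp only [map_zero, AddMonoidHom.zero_apply, smul_zero]
  | tmul a₁ a₂ =>
    erw [Algebra.TensorProduct.tmul_mul_tmul, one_mul, projF1_tmul, projF1_tmul,
      TensorProduct.smul_tmul', smul_eq_mul]
  | add x y hx hy =>
    erw [mul_add]
    erw [map_add, map_add]
    simp only [AddMonoidHom.add_apply]
    erw [hx, hy, smul_add]

lemma projF1_balance (c : A) (e : MulEnv B A) (p : N.carrier) :
    projF1 M N (c • e) p = projF1 M N e (c • p) := by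
  ext m
  have key : ∀ e' : A ⊗[B] A, projF1 M N ((1 ⊗ₜ[B] c) * e') p m =
      projF1 M N e' (c • p) m := by
    intro e'
    induction e' with
    | zero =>
      erw [mul_zero]
      change projF1 M N (0 : MulEnv B A) p m = projF1 M N (0 : MulEnv B A) (c • p) m
      simp only [map_zero, AddMonoidHom.zero_apply]
    | tmul a a' =>
      erw [Algebra.TensorProduct.tmul_mul_tmul, one_mul, projF1_tmul, projF1_tmul,
        mul_smul, smul_comm]
    | add x y hx hy =>
      erw [mul_add]
      erw [map_add, map_add]
      simp only [AddMonoidHom.add_apply]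
      erw [hx, hy]
  have hce : projF1 M N (c • e) p m = projF1 M N (algebraMap A (MulEnv B A) c * e) p m := by
    rw [Algebra.smul_def]
  rw [hce]
  exact key e

/-- The map `(A ⊗[B] A) ⊗[A] N →+ (M →+ A ⊗[B] Syn)`. -/
noncomputable def projZ : (MulEnv B A ⊗[A] N.carrier) →+ (M.carrier →+ (A ⊗[B] Syn B A M N)) :=
  TensorProduct.liftAddHom (projF1 M N) (projF1_balance M N)

lemma projZ_tmul (e : MulEnv B A) (p : N.carrier) (m : M.carrier) :
    projZ M N (e ⊗ₜ[A] p) m = projF1 M N e p m := by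
  show (TensorProduct.liftAddHom (projF1 M N) (projF1_balance M N)) (e ⊗ₜ[A] p) m = _
  rw [TensorProduct.liftAddHom_tmul]

lemma projZ_balance (c : A) (ξ : MulEnv B A ⊗[A] N.carrier) (m : M.carrier) :
    projZ M N (c • ξ) m = projZ M N ξ (c • m) := by
  induction ξ with
  | zero => simp
  | tmul e p =>
    have h1 : c • (e ⊗ₜ[A] p) = (c • e) ⊗ₜ[A] p := rfl
    rw [h1, projZ_tmul, projZ_tmul]
    have hmm : projF1 M N (c • e) p m = projF1 M N (e * algebraMap A (MulEnv B A) c) p m := by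
      rw [Algebra.smul_def, mul_comm]
    rw [hmm]
    exact projF1_mul_right M N c e p m
  | add x y hx hy =>
    rw [smul_add]
    simp only [map_add, AddMonoidHom.add_apply]
    rw [hx, hy]

lemma projZ_lhom_smul (a : A) (ξ : MulEnv B A ⊗[A] N.carrier) (m : M.carrier) :
    projZ M N (lhom B A a • ξ) m = a • projZ M N ξ m := by
  induction ξ with
  | zero => simp
  | tmul e p =>
    have h1 : lhom B A a • (e ⊗ₜ[A] p) = (lhom B A a * e) ⊗ₜ[A] p := rfl
    rw [h1, projZ_tmul, projZ_tmul]
    exact projF1_mul_left M N a e p m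
  | add x y hx hy =>
    rw [smul_add]
    simp only [map_add, AddMonoidHom.add_apply]
    rw [hx, hy, smul_add]

lemma projZ_relMul (ξ : MulEnv B A ⊗[A] N.carrier) (m : M.carrier) :
    relMul B A (Syn B A M N) (projZ M N ξ m) =
      sy B A M N (relMul A (MulEnv B A) N.carrier ξ) m := by
  induction ξ with
  | zero => simp [sy_zero_left]
  | tmul e p =>
    rw [projZ_tmul]
    have hval : relMul A (MulEnv B A) N.carrier (e ⊗ₜ[A] p) = e • p := by
      rw [relMul, LinearMap.liftBaseChange_tmul]
      rfl
    rw [hval]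
    have key : ∀ e' : A ⊗[B] A,
        relMul B A (Syn B A M N) (projF1 M N e' p m) =
          sy B A M N ((SMul.smul : MulEnv B A → N.carrier → N.carrier) e' p) m := by
      intro e'
      induction e' with
      | zero =>
        erw [map_zero]
        have hz : (SMul.smul : MulEnv B A → N.carrier → N.carrier) 0 p = 0 := zero_smul _ p
        erw [hz]
        simp [sy_zero_left]
      | tmul a a' =>
        rw [projF1_tmul]
        show relMul B A (Syn B A M N) (a ⊗ₜ[B] sy B A M N (a' • p) m) = _
        rw [relMul, LinearMap.liftBaseChange_tmul]
        show lhom B A a • sy B A M N (a' • p) m = _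
        rw [smul_sy]
        have h2 : lhom B A a • (a' • p) =
            (SMul.smul : MulEnv B A → N.carrier → N.carrier) (a ⊗ₜ[B] a') p := by
          have h3 : a' • p = algebraMap A (MulEnv B A) a' • p := (algebraMap_smul _ a' p).symm
          rw [h3, ← mul_smul]
          have h5 : lhom B A a * algebraMap A (MulEnv B A) a' =
              (((a ⊗ₜ[B] a' : A ⊗[B] A)) : MulEnv B A) := by
            show (a ⊗ₜ[B] 1 : A ⊗[B] A) * (1 ⊗ₜ[B] a' : A ⊗[B] A) = (a ⊗ₜ[B] a' : A ⊗[B] A)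
            rw [Algebra.TensorProduct.tmul_mul_tmul, mul_one, one_mul]
          rw [h5]
          rfl
        rw [h2]
      | add x y hx hy =>
        erw [map_add, AddMonoidHom.add_apply, map_add]
        have hsp : (SMul.smul : MulEnv B A → N.carrier → N.carrier) (x + y) p =
            (SMul.smul : MulEnv B A → N.carrier → N.carrier) x p +
              (SMul.smul : MulEnv B A → N.carrier → N.carrier) y p := add_smul (R := MulEnv B A) x y p
        rw [hx, hy, hsp, sy_add_left]
    exact key e
  | add x y hx hy =>
    simp only [map_add, AddMonoidHom.add_apply]
    rw [hx, hy, sy_add_left]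

variable {M N}

/-- If `N` is `(A ⊗[B] A, A)`-projective then `N ⊗[A] M` is `(A, B)`-projective. -/
lemma syn_projective (hN : IsRelProjective A (MulEnv B A) N.carrier) :
    IsRelProjective B A (Syn B A M N) := by
  classical
  obtain ⟨σ, hσ⟩ := hN
  have hσ' : ∀ p, relMul A (MulEnv B A) N.carrier (σ p) = p := fun p =>
    DFunLike.congr_fun hσ p
  -- the underlying additive section
  set s0 : (N.carrier ⊗[A] M.carrier) →+ (A ⊗[B] Syn B A M N) :=
    TensorProduct.liftAddHom
      (AddMonoidHom.mk' (fun p => projZ M N (σ p)) (fun p p' => by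
        show projZ M N (σ (p + p')) = _
        rw [map_add, map_add]))
      (by
        intro c p m
        show projZ M N (σ (c • p)) m = projZ M N (σ p) (c • m)
        have h1 : σ (c • p) = c • σ p := by
          have h2 : c • p = algebraMap A (MulEnv B A) c • p := (algebraMap_smul _ c p).symm
          have h4 : ∀ ξ : MulEnv B A ⊗[A] N.carrier,
              algebraMap A (MulEnv B A) c • ξ = c • ξ := by
            intro ξ
            induction ξ with
            | zero => simp
            | tmul e q =>
              show (algebraMap A (MulEnv B A) c • e) ⊗ₜ[A] q = (c • e) ⊗ₜ[A] q
              rw [algebraMap_smul]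
            | add x y hx hy => rw [smul_add, smul_add, hx, hy]
          rw [h2, map_smul, h4]
        rw [h1, projZ_balance]) with hs0
  have hs0_tmul : ∀ (p : N.carrier) (m : M.carrier),
      s0 (p ⊗ₜ[A] m) = projZ M N (σ p) m := by
    intro p m
    rw [hs0, TensorProduct.liftAddHom_tmul]
    rfl
  -- package as an `A`-linear section
  refine ⟨{ toFun := fun x => s0 x, map_add' := fun x y => map_add s0 x y,
            map_smul' := fun a x => ?_ }, ?_⟩
  · show s0 (a • x) = a • s0 x
    have key : ∀ y : N.carrier ⊗[A] M.carrier, s0 (lhom B A a • y) = a • s0 y := by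
      intro y
      induction y with
      | zero => simp
      | tmul p m =>
        have h1 : lhom B A a • (p ⊗ₜ[A] m : N.carrier ⊗[A] M.carrier) =
            (lhom B A a • p) ⊗ₜ[A] m := rfl
        rw [h1, hs0_tmul, hs0_tmul]
        have h2 : σ (lhom B A a • p) = lhom B A a • σ p := map_smul σ _ p
        rw [h2, projZ_lhom_smul]
      | add x y hx hy =>
        rw [smul_add, map_add, map_add, hx, hy, smul_add]
    exact key x
  · apply LinearMap.ext
    intro x
    show relMul B A (Syn B A M N) (s0 x) = x
    have key : ∀ y : N.carrier ⊗[A] M.carrier,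
        relMul B A (Syn B A M N) (s0 y) = (y : Syn B A M N) := by
      intro y
      induction y with
      | zero => simp; rfl
      | tmul p m =>
        rw [hs0_tmul, projZ_relMul, hσ']
        rfl
      | add x y hx hy =>
        rw [map_add, map_add]
        show relMul B A (Syn B A M N) (s0 x) + relMul B A (Syn B A M N) (s0 y) = _
        rw [hx, hy]; rfl
    exact key x

end Projectivity

section Assembly

variable {B A : Type} [CommRing B] [CommRing A] [Algebra B A]

lemma syn_subsingleton {M : RelModule B A} {N : RelModule A (MulEnv B A)}
    (h : Subsingleton N.carrier) : Subsingleton (Syn B A M N) := by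
  refine subsingleton_of_forall_eq 0 ?_
  intro x
  induction x using syn_induction with
  | zero => rfl
  | tmul p m =>
    have hp : p = 0 := Subsingleton.elim _ _
    rw [hp, sy_zero_left]
  | add x y hx hy => rw [hx, hy, add_zero]

/-- The main comparison: `pd_{(A,B)} M ≤ cdim(A,B)` for every `(A,B)`-module `M`. -/
lemma relPd_le_relCdim (M : RelModule B A) : relPd B A M ≤ relCdim B A := by
  rw [relCdim, relPd, relPd]
  apply sInf_le_sInf
  rintro n ⟨k, rfl, P, f, g, hres, hsub⟩
  obtain ⟨h', h, hh', hh0, hh⟩ := exists_homotopy hres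
  refine ⟨k, rfl, fun i => RelModule.mk (S := B) (R := A) (Syn B A M (P i)),
    fun i => tmap (M := M) (f i), tgmap (M := M) g, ?_, ?_⟩
  · -- the tensored complex is an `(A,B)`-resolution
    have hex0 := hres.2.2.1
    have hex := hres.2.2.2.1
    refine isRelResolution_of_homotopy ?_ ?_ ?_ (thbase h') (fun i => bmap (h i)) ?_ ?_ ?_
    · exact fun i => syn_projective (hres.1 i)
    · -- `g ∘ f 0 = 0` after tensoring
      intro x
      induction x using syn_induction with
      | zero => simp
      | tmul p m =>
        rw [tmap_sy, tgmap_sy]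
        rw [hex0.apply_apply_eq_zero p, zero_smul]
      | add x y hx hy => rw [map_add, map_add, hx, hy, add_zero]
    · -- `f i ∘ f (i+1) = 0` after tensoring
      intro i x
      induction x using syn_induction with
      | zero => simp
      | tmul p m =>
        rw [tmap_sy, tmap_sy]
        rw [(hex i).apply_apply_eq_zero p, sy_zero_left]
      | add x y hx hy => rw [map_add, map_add, hx, hy, add_zero]
    · -- `g ∘ h' = id` after tensoring
      intro m
      rw [thbase_apply, tgmap_sy, hh' 1, one_smul]
    · -- homotopy identity in degree `0`
      intro x
      beta_reduce
      induction x using syn_induction with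
      | zero => simp
      | tmul p m =>
        simp only [bmap_sy, tmap_sy, tgmap_sy, thbase_apply]
        have h2 : g p • h' 1 = h' (g p) := by
          rw [← map_smul, smul_eq_mul, mul_one]
        have h1 : sy B A M (P 0) (h' 1) (g p • m) = sy B A M (P 0) (h' (g p)) m := by
          rw [sy_smul_right, h2]
        rw [h1, ← sy_add_left, hh0 p]
      | add x y hx hy =>
        rw [map_add, map_add, map_add, map_add]
        calc _ = (tmap (M := M) (f 0) (bmap (h 0) x) + thbase h' (tgmap (M := M) g x)) +
            (tmap (M := M) (f 0) (bmap (h 0) y) + thbase h' (tgmap (M := M) g y)) := by abel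
        _ = x + y := by rw [hx, hy]
    · -- homotopy identity in higher degrees
      intro i x
      beta_reduce
      induction x using syn_induction with
      | zero => simp
      | tmul p m =>
        simp only [bmap_sy, tmap_sy]
        rw [← sy_add_left, hh i p]
      | add x y hx hy =>
        rw [map_add, map_add, map_add, map_add]
        calc _ = (tmap (M := M) (f (i + 1)) (bmap (h (i + 1)) x) +
              bmap (h i) (tmap (M := M) (f i) x)) +
            (tmap (M := M) (f (i + 1)) (bmap (h (i + 1)) y) +
              bmap (h i) (tmap (M := M) (f i) y)) := by abel
        _ = x + y := by rw [hx, hy]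
  · -- eventual vanishing
    intro i hi
    exact syn_subsingleton (hsub i hi)

end Assembly

/-!
Statement 2: For a homomorphism of commutative rings `B → A` and every `A`-module `M`,
`pd_{(A,B)} M ≤ pd_{(A ⊗_B A, A)} A = cdim(A,B)`; consequently `gldim(A,B) ≤ cdim(A,B)`.
-/
theorem relative_gldim_le_relative_cdim
    (B A : Type) [CommRing B] [CommRing A] [Algebra B A] :
    (∀ M : RelModule B A, relPd B A M ≤ relCdim B A) ∧
    relGldim B A ≤ relCdim B A := by
  refine ⟨fun M => relPd_le_relCdim M, ?_⟩
  rw [relGldim]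
  exact iSup_le fun M => relPd_le_relCdim M
end

section
/- Let k be a perfect field, B a finitely generated k-algebra, and A a B-algebra which is essentially of finite type over B (not necessarily flat). Then for every prime ideal 𝔮 of B one has gldim(A ⊗_B k(𝔮)) ≤ gldim(A,B), i.e., the (absolute) global dimension of each fiber ring is bounded above by the relative global dimension. -/
open TensorProduct DirectSum

section AbsDefs

variable (R : Type) [CommRing R]

/-- A bundled `R`-module. -/
structure ModuleOver where
  carrier : Type
  [isAddCommGroup : AddCommGroup carrier]
  [isModule : Module R carrier]

attribute [instance] ModuleOver.isAddCommGroup ModuleOver.isModule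

/-- `P, f, g` form a projective resolution `⋯ → P 1 → P 0 → M → 0` of `M`. -/
noncomputable def IsProjResolution (M : ModuleOver R) (P : ℕ → ModuleOver R)
    (f : ∀ i, (P (i + 1)).carrier →ₗ[R] (P i).carrier)
    (g : (P 0).carrier →ₗ[R] M.carrier) : Prop :=
  (∀ i, Module.Projective R (P i).carrier) ∧
  Function.Surjective g ∧
  Function.Exact (f 0) g ∧
  (∀ i, Function.Exact (f (i + 1)) (f i))

/-- The projective dimension of the `R`-module `M`: the least length of a projective
resolution of `M` (`⊤` if there is none). -/
noncomputable def modulePd (M : ModuleOver R) : ℕ∞ :=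
  sInf {n : ℕ∞ | ∃ k : ℕ, n = (k : ℕ∞) ∧
    ∃ (P : ℕ → ModuleOver R) (f : ∀ i, (P (i + 1)).carrier →ₗ[R] (P i).carrier)
      (g : (P 0).carrier →ₗ[R] M.carrier),
      IsProjResolution R M P f g ∧ ∀ i, k ≤ i → Subsingleton (P (i + 1)).carrier}

/-- The (absolute) global dimension of the ring `R`. -/
noncomputable def ringGldim : ℕ∞ := ⨆ M : ModuleOver R, modulePd R M

end AbsDefs

section ResField

/-- The residue field `k(q) = B_q / q B_q` of a prime ideal `q`. -/
noncomputable abbrev resField (B : Type) [CommRing B] (q : Ideal B) [q.IsPrime] : Type :=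
  IsLocalRing.ResidueField (Localization.AtPrime q)

noncomputable instance (B : Type) [CommRing B] (q : Ideal B) [q.IsPrime] :
    Algebra B (resField B q) :=
  ((IsLocalRing.residue (Localization.AtPrime q)).comp
    (algebraMap B (Localization.AtPrime q))).toAlgebra

noncomputable instance (B : Type) [CommRing B] (q : Ideal B) [q.IsPrime] :
    Module B (resField B q) :=
  Algebra.toModule

end ResField

/-!
Let `F = A ⊗[B] k(𝔮)` and let `N` be an `F`-module, viewed as an `A`-module. Apply `F ⊗[A] -` to an
`(A,B)`-exact resolution of `N` by `(A,B)`-projectives. Since `F ⊗[A] X ≅ X ⊗[B] k(𝔮)` and every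
image in the resolution is a `B`-direct summand, right exactness of `- ⊗[B] k(𝔮)` keeps the
resolution exact. An `(A,B)`-projective `P` is an `A`-direct summand of `A ⊗[B] P`, so `F ⊗[A] P`
is an `F`-direct summand of `F ⊗[k(𝔮)] (k(𝔮) ⊗[B] P)`, which is free. Finally `B → k(𝔮)` is a ring
epimorphism, hence so is `A → F`, and therefore `F ⊗[A] N ≅ N`. This gives a projective
resolution of `N` over `F` of the same length, so `pd_F N ≤ pd_(A,B) N`.
-/

open LinearMap in
lemma Function.Exact.rTensor_of_isCompl_range {R M N P : Type} [CommRing R] [AddCommGroup M]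
    [AddCommGroup N] [AddCommGroup P] [Module R M] [Module R N] [Module R P]
    {f : M →ₗ[R] N} {g : N →ₗ[R] P} (hfg : Function.Exact f g) (Q : Type) [AddCommGroup Q]
    [Module R Q] {U : Submodule R P} (hU : IsCompl (range g) U) :
    Function.Exact (f.rTensor Q) (g.rTensor Q) := by
  have hsplit :
      ((range g).projectionOnto U hU).rTensor Q ∘ₗ (range g).subtype.rTensor Q = LinearMap.id := by
    rw [← rTensor_comp, Submodule.projectionOnto_comp_subtype, rTensor_id]
  have hinj : Function.Injective ((range g).subtype.rTensor Q) :=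
    HasLeftInverse.injective ⟨_, fun x => congr($hsplit x)⟩
  have hexact : Function.Exact (f.rTensor Q) (g.rangeRestrict.rTensor Q) :=
    rTensor_exact Q (by rwa [exact_iff, ker_rangeRestrict, ← exact_iff])
      g.surjective_rangeRestrict
  rw [show g = (range g).subtype ∘ₗ g.rangeRestrict from rfl, rTensor_comp, coe_comp]
  exact hexact.comp_injective _ hinj (map_zero _)

section

variable (B A K : Type) [CommRing B] [CommRing A] [Algebra B A] [CommRing K] [Algebra B K]
variable {M M' M'' : Type} [AddCommGroup M] [Module B M] [Module A M] [IsScalarTower B A M]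
  [AddCommGroup M'] [Module B M'] [Module A M'] [IsScalarTower B A M']
  [AddCommGroup M''] [Module B M''] [Module A M''] [IsScalarTower B A M'']

variable (M) in
noncomputable def baseChangeEquivRTensor : (A ⊗[B] K) ⊗[A] M ≃ₗ[B] M ⊗[B] K :=
  (TensorProduct.comm A (A ⊗[B] K) M).restrictScalars B ≪≫ₗ
    (AlgebraTensorModule.cancelBaseChange B A A M K).restrictScalars B

lemma rTensor_comp_baseChangeEquivRTensor (φ : M →ₗ[A] M') :
    (φ.restrictScalars B).rTensor K ∘ₗ (baseChangeEquivRTensor B A K M).toLinearMap =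
      (baseChangeEquivRTensor B A K M').toLinearMap ∘ₗ
        (φ.baseChange (A ⊗[B] K)).restrictScalars B := by
  refine LinearMap.ext fun z => ?_
  induction z using TensorProduct.induction_on with
  | zero => simp
  | tmul c m =>
    induction c using TensorProduct.induction_on with
    | zero => simp
    | tmul a k => simp [baseChangeEquivRTensor]
    | add c c' hc hc' => simp_all [add_tmul]
  | add z z' hz hz' => simp_all

lemma Function.Exact.baseChange_of_isCompl_range {f : M →ₗ[A] M'} {g : M' →ₗ[A] M''}
    (hfg : Function.Exact f g) {U : Submodule B M''}
    (hU : IsCompl ((LinearMap.range g).restrictScalars B) U) :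
    Function.Exact (f.baseChange (A ⊗[B] K)) (g.baseChange (A ⊗[B] K)) := by
  have hfgB : Function.Exact (f.restrictScalars B) (g.restrictScalars B) := hfg
  rw [← LinearMap.range_restrictScalars] at hU
  exact (Function.Exact.iff_of_ladder_linearEquiv
    (rTensor_comp_baseChangeEquivRTensor B A K f)
    (rTensor_comp_baseChangeEquivRTensor B A K g)).mp (hfgB.rTensor_of_isCompl_range K hU)

end

lemma Algebra.IsEpi.algHom_ext {R S T : Type} [CommRing R] [CommRing S] [CommRing T]
    [Algebra R S] [Algebra R T] [Algebra.IsEpi R S] (φ ψ : S →ₐ[R] T) : φ = ψ := by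
  ext s
  have h := congr(Algebra.TensorProduct.lift φ ψ (fun _ _ => .all _ _)
    $((Algebra.isEpi_iff_forall_one_tmul_eq R S).mp ‹_› s))
  simpa using h.symm

instance Algebra.IsEpi.baseChange (B A K : Type) [CommRing B] [CommRing A] [Algebra B A]
    [CommRing K] [Algebra B K] [Algebra.IsEpi B K] : Algebra.IsEpi A (A ⊗[B] K) := by
  refine (Algebra.isEpi_iff_forall_one_tmul_eq A (A ⊗[B] K)).mpr fun x => ?_
  have hK (k : K) : (1 : A ⊗[B] K) ⊗ₜ[A] ((1 : A) ⊗ₜ[B] k) = ((1 : A) ⊗ₜ[B] k) ⊗ₜ[A] 1 := by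
    simpa using DFunLike.congr_fun (Algebra.IsEpi.algHom_ext (R := B)
      (T := (A ⊗[B] K) ⊗[A] (A ⊗[B] K))
      (((Algebra.TensorProduct.includeRight (R := A) (A := A ⊗[B] K)).restrictScalars B).comp
        Algebra.TensorProduct.includeRight)
      (((Algebra.TensorProduct.includeLeft (R := A) (S := A) (B := A ⊗[B] K)).restrictScalars
        B).comp Algebra.TensorProduct.includeRight)) k
  induction x using TensorProduct.induction_on with
  | zero => simp
  | tmul a k =>
    rw [← mul_one a, ← smul_eq_mul, ← TensorProduct.smul_tmul', TensorProduct.tmul_smul, hK,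
      TensorProduct.smul_tmul']
  | add x y hx hy => rw [TensorProduct.tmul_add, hx, hy, TensorProduct.add_tmul]

instance isEpi_resField (B : Type) [CommRing B] (q : Ideal B) [q.IsPrime] :
    Algebra.IsEpi B (resField B q) := by
  rw [← CommRingCat.epi_iff_epi]
  exact @CategoryTheory.epi_comp _ _ _ _ _ _
    (IsLocalization.epi q.primeCompl (Localization.AtPrime q)) _
    (CategoryTheory.ConcreteCategory.epi_of_surjective
      (CommRingCat.ofHom (IsLocalRing.residue (Localization.AtPrime q)))
      IsLocalRing.residue_surjective)

section

variable {B A : Type} [CommRing B] [CommRing A] [Algebra B A] (K : Type) [Field K] [Algebra B K]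

attribute [local instance] Algebra.TensorProduct.rightAlgebra in
lemma IsRelProjective.projective_baseChange {M : Type} [AddCommGroup M] [Module B M] [Module A M]
    [IsScalarTower B A M] (h : IsRelProjective B A M) :
    Module.Projective (A ⊗[B] K) ((A ⊗[B] K) ⊗[A] M) := by
  obtain ⟨s, hs⟩ := h
  have : Module.Projective (A ⊗[B] K) ((A ⊗[B] K) ⊗[B] M) :=
    .of_equiv (AlgebraTensorModule.cancelBaseChange B K (A ⊗[B] K) (A ⊗[B] K) M)
  have : Module.Projective (A ⊗[B] K) ((A ⊗[B] K) ⊗[A] (A ⊗[B] M)) :=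
    .of_equiv (AlgebraTensorModule.cancelBaseChange B A (A ⊗[B] K) (A ⊗[B] K) M).symm
  refine .of_split (s.baseChange (A ⊗[B] K)) ((relMul B A M).baseChange (A ⊗[B] K)) ?_
  rw [← LinearMap.baseChange_comp, hs, LinearMap.baseChange_id]

variable {K} {M : RelModule B A} {P : ℕ → RelModule B A}
  {f : ∀ i, (P (i + 1)).carrier →ₗ[A] (P i).carrier} {g : (P 0).carrier →ₗ[A] M.carrier}

lemma IsRelResolution.exists_isCompl_range (h : IsRelResolution B A M P f g) (i : ℕ) :
    ∃ U, IsCompl ((LinearMap.range (f i)).restrictScalars B) U := by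
  obtain ⟨-, -, hex₀, hex, hg, hf⟩ := h
  cases i with
  | zero => rwa [← LinearMap.exact_iff.mp hex₀]
  | succ i => rw [← LinearMap.exact_iff.mp (hex i)]; exact hf i

lemma IsRelResolution.isProjResolution_baseChange [Algebra.IsEpi B K]
    [Module (A ⊗[B] K) M.carrier] [IsScalarTower A (A ⊗[B] K) M.carrier]
    (h : IsRelResolution B A M P f g) :
    IsProjResolution (A ⊗[B] K) ⟨M.carrier⟩ (fun i => ⟨(A ⊗[B] K) ⊗[A] (P i).carrier⟩)
      (fun i => (f i).baseChange (A ⊗[B] K))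
      ((TensorProduct.lid' A (A ⊗[B] K) M.carrier).toLinearMap ∘ₗ g.baseChange (A ⊗[B] K)) := by
  choose U hU using h.exists_isCompl_range
  obtain ⟨hproj, hg, hex₀, hex, -, -⟩ := h
  refine ⟨fun i => (hproj i).projective_baseChange K,
    (TensorProduct.lid' A _ _).surjective.comp (LinearMap.baseChange_surjective _ hg), ?_,
    fun i => (hex i).baseChange_of_isCompl_range B A K (hU i)⟩
  rw [LinearEquiv.postcomp_exact_iff_exact]
  refine hex₀.baseChange_of_isCompl_range B A K (U := ⊥) ?_
  rw [LinearMap.range_eq_top.mpr hg, Submodule.restrictScalars_top]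
  exact isCompl_top_bot

end

section

variable (B A K : Type) [CommRing B] [CommRing A] [Algebra B A] [Field K] [Algebra B K]
  [Algebra.IsEpi B K]

lemma modulePd_le_relPd (N : ModuleOver (A ⊗[B] K)) [Module A N.carrier]
    [IsScalarTower A (A ⊗[B] K) N.carrier] [Module B N.carrier] [IsScalarTower B A N.carrier] :
    modulePd (A ⊗[B] K) N ≤ relPd B A ⟨N.carrier⟩ := by
  refine sInf_le_sInf ?_
  rintro _ ⟨n, rfl, P, f, g, hres, hlen⟩
  exact ⟨n, rfl, _, _, _, hres.isProjResolution_baseChange,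
    fun i hi => have := hlen i hi; inferInstance⟩

lemma ringGldim_tensorProduct_le_relGldim : ringGldim (A ⊗[B] K) ≤ relGldim B A := by
  refine iSup_le fun N => ?_
  let : Module A N.carrier := .compHom _ (algebraMap A (A ⊗[B] K))
  let : Module B N.carrier := .compHom _ (algebraMap B A)
  have : IsScalarTower A (A ⊗[B] K) N.carrier := .of_algebraMap_smul fun _ _ => rfl
  have : IsScalarTower B A N.carrier := .of_algebraMap_smul fun _ _ => rfl
  exact (modulePd_le_relPd B A K N).trans (le_iSup (relPd B A) ⟨N.carrier⟩)

end

theorem fiber_gldim_le_relative_gldim_general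
    (B A : Type)
    [CommRing B]
    [CommRing A] [Algebra B A] :
    ∀ q : PrimeSpectrum B, ringGldim (A ⊗[B] resField B q.asIdeal) ≤ relGldim B A :=
  fun q => ringGldim_tensorProduct_le_relGldim B A (resField B q.asIdeal)

theorem fiber_gldim_le_relative_gldim
    (k B A : Type) [Field k] [PerfectField k]
    [CommRing B] [Algebra k B] [Algebra.FiniteType k B]
    [CommRing A] [Algebra B A] [Algebra.EssFiniteType B A] :
    ∀ q : PrimeSpectrum B, ringGldim (A ⊗[B] resField B q.asIdeal) ≤ relGldim B A :=
  fiber_gldim_le_relative_gldim_general B A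
end

section
/- Let B be a noetherian commutative ring and A a smooth noetherian B-algebra such that Ω_{A|B} = J/J² = 0, where J = ker(μ : A ⊗_B A → A) (i.e., the extension B ⊆ A is étale). Then gldim(A,B) = 0; that is, every A-module is (A,B)-projective. Moreover, for each prime ideal 𝔭 of B, the fiber ring A ⊗_B k(𝔭) has global dimension 0. -/
open TensorProduct DirectSum

section Smooth

variable (B A : Type) [CommRing B] [CommRing A] [Algebra B A]

/-- An ideal `J` of `R` is a locally complete intersection if, for every maximal ideal `m`
of `R`, the localized ideal `J_m` is generated by a regular sequence. -/
noncomputable def IsLocallyCompleteIntersection (R : Type) [CommRing R] (J : Ideal R) : Prop :=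
  ∀ (m : Ideal R) (hm : m.IsMaximal),
    haveI : m.IsPrime := hm.isPrime
    ∃ rs : List (Localization.AtPrime m),
      RingTheory.Sequence.IsRegular (Localization.AtPrime m) rs ∧
      Ideal.span {x | x ∈ rs} = J.map (algebraMap R (Localization.AtPrime m))

/-- The kernel `J` of the multiplication map `μ : A ⊗[B] A → A`, `a ⊗ a' ↦ a a'`. -/
noncomputable def mulKer : Ideal (A ⊗[B] A) :=
  RingHom.ker (Algebra.TensorProduct.lmul' B (S := A)).toRingHom

/-- Smoothness in the sense of the paper: `A` is a flat `B`-algebra, essentially of finite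
type, and `J = ker (μ : A ⊗[B] A → A)` is a locally complete intersection. -/
noncomputable def PaperSmooth : Prop :=
  Module.Flat B A ∧ Algebra.EssFiniteType B A ∧
    IsLocallyCompleteIntersection (A ⊗[B] A) (mulKer B A)

end Smooth

section Graded

variable (B A : Type) [CommRing B] [CommRing A] [Algebra B A]

/-- The `i`-th piece `J^i / J^{i+1}` of the associated graded ring of `A^e = A ⊗[B] A` with
respect to `J = ker μ`, regarded as an `A`-module. -/
noncomputable abbrev grPiece (i : ℕ) : Type :=
  ((mulKer B A ^ i).restrictScalars A) ⧸
    (Submodule.comap ((mulKer B A ^ i).restrictScalars A).subtype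
      ((mulKer B A ^ (i + 1)).restrictScalars A))

/-- The associated graded ring `gr(A^e) = ⊕_i J^i/J^{i+1}`, realized as the quotient of the
Rees algebra `⊕_i J^i` by the ideal `J·Rees(J) = ⊕_i J^{i+1}`. -/
noncomputable abbrev grRing : Type :=
  (reesAlgebra (mulKer B A)) ⧸
    ((mulKer B A).map (algebraMap (A ⊗[B] A) (reesAlgebra (mulKer B A))))

/-- The degree-zero projection `gr(A^e) → A^e/J ≅ A`, through which `A` becomes a
`gr(A^e)`-module. -/
noncomputable def grToA : grRing B A →+* A :=
  Ideal.Quotient.lift _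
    ((Algebra.TensorProduct.lmul' B (S := A)).toRingHom.comp
      ((Polynomial.evalRingHom 0).comp (reesAlgebra (mulKer B A)).val.toRingHom))
    (fun a ha => by
      rw [← RingHom.mem_ker]
      refine Ideal.map_le_iff_le_comap.mpr ?_ ha
      intro x hx
      simp only [Ideal.mem_comap, RingHom.mem_ker, RingHom.coe_comp, Function.comp_apply]
      have h1 : ((reesAlgebra (mulKer B A)).val.toRingHom
          (algebraMap (A ⊗[B] A) (reesAlgebra (mulKer B A)) x)) = Polynomial.C x := rfl
      rw [h1]
      show Algebra.TensorProduct.lmul' B (Polynomial.eval 0 (Polynomial.C x)) = 0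
      rw [Polynomial.eval_C]
      exact RingHom.mem_ker.mp hx)

end Graded

section AuxSep
variable (S R : Type) [CommRing S] [CommRing R] [Algebra S R]
variable (M : Type) [AddCommGroup M] [Module S M] [Module R M] [IsScalarTower S R M]

noncomputable def act : R ⊗[S] R →ₗ[S] (R ⊗[S] M) →ₗ[S] (R ⊗[S] M) :=
  TensorProduct.lift <| LinearMap.mk₂ S
    (fun x y => TensorProduct.map (LinearMap.mulLeft S x)
      ((LinearMap.lsmul R M y).restrictScalars S))
    (fun x₁ x₂ y => by
      ext u m
      simp [add_mul, TensorProduct.add_tmul])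
    (fun c x y => by
      ext u m
      simp [smul_mul_assoc, TensorProduct.smul_tmul'])
    (fun x y₁ y₂ => by
      ext u m
      simp [add_smul, TensorProduct.tmul_add])
    (fun c x y => by
      ext u m
      simp only [AlgebraTensorModule.curry_apply, TensorProduct.curry_apply,
        LinearMap.coe_restrictScalars, TensorProduct.map_tmul, LinearMap.mulLeft_apply,
        LinearMap.lsmul_apply, LinearMap.smul_apply]
      rw [smul_assoc, TensorProduct.tmul_smul])

@[simp] lemma act_tmul (x y : R) (u : R) (m : M) :
    act S R M (x ⊗ₜ y) (u ⊗ₜ m) = (x * u) ⊗ₜ (y • m) := rfl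

lemma act_mul (z w : R ⊗[S] R) (t : R ⊗[S] M) :
    act S R M (z * w) t = act S R M z (act S R M w t) := by
  induction z using TensorProduct.induction_on with
  | zero => simp
  | add z₁ z₂ h₁ h₂ => simp [add_mul, h₁, h₂]
  | tmul x y =>
    induction w using TensorProduct.induction_on with
    | zero => simp
    | add w₁ w₂ h₁ h₂ => simp [mul_add, h₁, h₂]
    | tmul u v =>
      rw [Algebra.TensorProduct.tmul_mul_tmul]
      induction t using TensorProduct.induction_on with
      | zero => simp
      | add t₁ t₂ h₁ h₂ => simp [h₁, h₂]
      | tmul p m =>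
        simp [Algebra.TensorProduct.tmul_mul_tmul, mul_assoc, mul_smul]

lemma act_algLeft (a : R) (t : R ⊗[S] M) :
    act S R M (a ⊗ₜ 1) t = a • t := by
  induction t using TensorProduct.induction_on with
  | zero => simp
  | add t₁ t₂ h₁ h₂ => simp [h₁, h₂]
  | tmul p m => simp [smul_tmul']

end AuxSep

section SepMain
variable {S R : Type} [CommRing S] [CommRing R] [Algebra S R]

theorem isRelProjective_of_idem (e : R ⊗[S] R)
    (heJ : e ∈ RingHom.ker (Algebra.TensorProduct.lmul' S (S := R)).toRingHom)
    (hid : ∀ x ∈ RingHom.ker (Algebra.TensorProduct.lmul' S (S := R)).toRingHom, e * x = x)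
    (M : Type) [AddCommGroup M] [Module S M] [Module R M] [IsScalarTower S R M] :
    IsRelProjective S R M := by
  have he0 : Algebra.TensorProduct.lmul' S (S := R) e = 0 := heJ
  -- the splitting
  refine ⟨{ toFun := fun m => act S R M (1 - e) (1 ⊗ₜ m)
            map_add' := fun m₁ m₂ => by simp only [TensorProduct.tmul_add, map_add]
            map_smul' := fun a m => ?_ }, ?_⟩
  · -- A-linearity
    have hδ : (1 : R) ⊗ₜ[S] a - a ⊗ₜ[S] (1 : R) ∈
        RingHom.ker (Algebra.TensorProduct.lmul' S (S := R)).toRingHom := by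
      simp [RingHom.mem_ker, Algebra.TensorProduct.lmul'_apply_tmul]
    have key : (1 - e) * ((1 : R) ⊗ₜ[S] a) = (1 - e) * (a ⊗ₜ[S] (1 : R)) := by
      have h := hid _ hδ
      rw [mul_sub] at h
      rw [sub_mul, sub_mul, one_mul, one_mul]
      linear_combination -h
    have h1 : (1 : R) ⊗ₜ[S] (a • m) = act S R M ((1 : R) ⊗ₜ[S] a) ((1 : R) ⊗ₜ[S] m) := by
      rw [act_tmul, one_mul]
    have h2 : (a : R) • act S R M (1 - e) ((1 : R) ⊗ₜ[S] m)
        = act S R M (a ⊗ₜ[S] (1 : R)) (act S R M (1 - e) ((1 : R) ⊗ₜ[S] m)) := by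
      rw [act_algLeft]
    simp only [RingHom.id_apply]
    rw [h1, ← act_mul, key, mul_comm, act_mul, ← h2]
  · -- splitting property
    ext m
    have hval : ∀ z : R ⊗[S] R, relMul S R M (act S R M z ((1 : R) ⊗ₜ[S] m))
        = (Algebra.TensorProduct.lmul' S (S := R) z) • m := by
      intro z
      induction z using TensorProduct.induction_on with
      | zero => simp
      | add z₁ z₂ h₁ h₂ => simp [map_add, h₁, h₂, add_smul]
      | tmul x y =>
        rw [act_tmul, Algebra.TensorProduct.lmul'_apply_tmul, mul_one]
        show LinearMap.liftBaseChange R LinearMap.id (x ⊗ₜ[S] (y • m)) = (x * y) • m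
        rw [LinearMap.liftBaseChange_tmul, LinearMap.id_apply, smul_smul]
    simp only [LinearMap.comp_apply, LinearMap.coe_mk, AddHom.coe_mk, LinearMap.id_apply]
    rw [hval, map_sub, map_one, he0, sub_zero, one_smul]
end SepMain

section Gen
variable {S R : Type} [CommRing S] [CommRing R] [Algebra S R]

theorem idem_ker_of_gen (e : R ⊗[S] R)
    (hgen : ∀ a : R, e * ((1:R) ⊗ₜ[S] a - a ⊗ₜ[S] (1:R)) = (1:R) ⊗ₜ[S] a - a ⊗ₜ[S] (1:R)) :
    ∀ x ∈ RingHom.ker (Algebra.TensorProduct.lmul' S (S := R)).toRingHom, e * x = x := by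
  intro x hx
  have hx' : x ∈ KaehlerDifferential.ideal S R := hx
  rw [← KaehlerDifferential.span_range_eq_ideal] at hx'
  refine Submodule.span_induction ?_ ?_ ?_ ?_ hx'
  · rintro _ ⟨a, rfl⟩; exact hgen a
  · simp
  · intro u v _ _ hu hv; rw [mul_add, hu, hv]
  · intro r u _ hu; rw [smul_eq_mul, mul_left_comm, hu]
end Gen

section Resol
variable (S R : Type) [CommRing S] [CommRing R] [Algebra S R]

instance : IsScalarTower S R PUnit := ⟨fun _ _ _ => Subsingleton.elim _ _⟩

noncomputable def punitRel : RelModule S R := ⟨PUnit⟩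

theorem isRelProjective_punit : IsRelProjective S R PUnit :=
  ⟨0, Subsingleton.elim _ _⟩

theorem relPd_eq_zero (M : RelModule S R) (hM : IsRelProjective S R M.carrier) :
    relPd S R M = 0 := by
  refine le_antisymm (sInf_le ?_) (zero_le)
  refine ⟨0, by simp, fun n => match n with | 0 => M | _+1 => punitRel S R,
    fun i => 0, LinearMap.id, ⟨?_, Function.surjective_id, ?_, ?_, ?_, ?_⟩,
    fun i _ => inferInstanceAs (Subsingleton PUnit)⟩
  · rintro (_|i)
    · exact hM
    · exact isRelProjective_punit S R
  · intro y
    constructor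
    · intro hy
      exact ⟨PUnit.unit, hy.symm⟩
    · rintro ⟨x, rfl⟩
      simp
  · intro i y
    constructor
    · intro _
      exact ⟨PUnit.unit, (inferInstance : Subsingleton PUnit.{1}).elim _ _⟩
    · intro _
      rfl
  · refine ⟨⊤, ?_⟩
    have : LinearMap.ker (LinearMap.id (R := R) (M := M.carrier)) = ⊥ := LinearMap.ker_id
    rw [this]
    simpa using isCompl_bot_top
  · intro i
    refine ⟨⊥, ?_⟩
    have key : ∀ (T : Type) (_ : AddCommGroup T) (_ : Module S T) (N : Submodule S T),
        N = ⊤ → IsCompl N ⊥ := fun _ _ _ N h => h ▸ isCompl_top_bot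
    apply key
    ext x
    simp [LinearMap.mem_ker]

theorem relGldim_eq_zero (h : ∀ M : RelModule S R, IsRelProjective S R M.carrier) :
    relGldim S R = 0 :=
  le_antisymm (iSup_le fun M => (relPd_eq_zero S R M (h M)).le) (zero_le)
end Resol

section ResolAbs
variable (R : Type) [CommRing R]

noncomputable def punitMod : ModuleOver R := ⟨PUnit⟩

theorem modulePd_eq_zero (M : ModuleOver R) (hM : Module.Projective R M.carrier) :
    modulePd R M = 0 := by
  refine le_antisymm (sInf_le ?_) (zero_le)
  refine ⟨0, by simp, fun n => match n with | 0 => M | _+1 => punitMod R,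
    fun i => 0, LinearMap.id, ⟨?_, Function.surjective_id, ?_, ?_⟩,
    fun i _ => inferInstanceAs (Subsingleton PUnit)⟩
  · rintro (_|i)
    · exact hM
    · exact inferInstanceAs (Module.Projective R PUnit)
  · intro y
    constructor
    · intro hy
      exact ⟨PUnit.unit, hy.symm⟩
    · rintro ⟨x, rfl⟩
      simp
  · intro i y
    constructor
    · intro _
      exact ⟨PUnit.unit, (inferInstance : Subsingleton PUnit.{1}).elim _ _⟩
    · intro _
      rfl

theorem ringGldim_eq_zero (h : ∀ M : ModuleOver R, Module.Projective R M.carrier) :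
    ringGldim R = 0 :=
  le_antisymm (iSup_le fun M => (modulePd_eq_zero R M (h M)).le) (zero_le)
end ResolAbs


section Noeth
theorem essNoetherian (R S : Type) [CommRing R] [CommRing S] [Algebra R S]
    [IsNoetherianRing R] [Algebra.EssFiniteType R S] : IsNoetherianRing S := by
  have h1 : IsNoetherianRing (Algebra.EssFiniteType.subalgebra R S) :=
    Algebra.FiniteType.isNoetherianRing R _
  exact IsLocalization.isNoetherianRing (Algebra.EssFiniteType.submonoid R S) S h1
end Noeth

theorem mulKer_le_sq (B A : Type) [CommRing B] [CommRing A] [Algebra B A]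
    (homega : Subsingleton (grPiece B A 1)) :
    mulKer B A ≤ mulKer B A • mulKer B A := by
  have htop := (Submodule.Quotient.subsingleton_iff).mp homega
  intro x hx
  have hx1 : x ∈ (mulKer B A ^ 1).restrictScalars A := by
    rwa [pow_one]
  have : (⟨x, hx1⟩ : ((mulKer B A ^ 1).restrictScalars A)) ∈
      (Submodule.comap ((mulKer B A ^ 1).restrictScalars A).subtype
        ((mulKer B A ^ (1 + 1)).restrictScalars A)) := htop ▸ Submodule.mem_top
  have hx2 : x ∈ mulKer B A ^ 2 := this
  rwa [pow_two, ← Ideal.smul_eq_mul] at hx2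


section Fiber

attribute [local instance] Algebra.TensorProduct.rightAlgebra

variable (B A k : Type) [CommRing B] [CommRing A] [Algebra B A] [Field k] [Algebra B k]

set_option maxHeartbeats 2000000 in
theorem fiber_projective
    (e : A ⊗[B] A) (heJ : e ∈ mulKer B A) (hid : ∀ x ∈ mulKer B A, e * x = x)
    (N : Type) [AddCommGroup N] [Module (A ⊗[B] k) N] :
    Module.Projective (A ⊗[B] k) N := by
  haveI : SMulCommClass k B (A ⊗[B] k) :=
    ⟨fun c b x => by simp [Algebra.smul_def, mul_left_comm]⟩
  set Abar := A ⊗[B] k with hAbar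
  let φ : A →+* Abar := Algebra.TensorProduct.includeLeftRingHom
  let f₁ : A →ₐ[B] (Abar ⊗[k] Abar) :=
    { toRingHom := (Algebra.TensorProduct.includeLeftRingHom (R := k) (A := Abar)
        (B := Abar)).comp φ
      commutes' := fun b => rfl }
  let f₂ : A →ₐ[B] (Abar ⊗[k] Abar) :=
    { toRingHom := (Algebra.TensorProduct.includeRight (R := k) (A := Abar)
        (B := Abar)).toRingHom.comp φ
      commutes' := fun b => by
        show (1 : Abar) ⊗ₜ[k] (φ (algebraMap B A b)) = algebraMap B (Abar ⊗[k] Abar) b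
        have h1 : φ (algebraMap B A b) = algebraMap B Abar b := rfl
        have h2 : algebraMap B Abar b = algebraMap k Abar (algebraMap B k b) :=
          (IsScalarTower.algebraMap_apply B k Abar b)
        rw [h1, h2]
        have h3 : algebraMap B (Abar ⊗[k] Abar) b = (algebraMap B Abar b) ⊗ₜ[k] (1 : Abar) :=
          rfl
        rw [h3, h2, ← Algebra.TensorProduct.algebraMap_apply,
          Algebra.TensorProduct.algebraMap_apply'] }
  let ψ : A ⊗[B] A →ₐ[B] (Abar ⊗[k] Abar) := Algebra.TensorProduct.productMap f₁ f₂
  have hψtmul : ∀ x y : A, ψ (x ⊗ₜ[B] y) = (φ x) ⊗ₜ[k] (φ y) := by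
    intro x y
    rw [show ψ (x ⊗ₜ[B] y) = f₁ x * f₂ y from
      Algebra.TensorProduct.productMap_apply_tmul f₁ f₂ x y]
    show ((φ x) ⊗ₜ[k] (1 : Abar)) * ((1 : Abar) ⊗ₜ[k] (φ y)) = _
    rw [Algebra.TensorProduct.tmul_mul_tmul, one_mul, mul_one]
  have hψμ : ∀ z : A ⊗[B] A,
      Algebra.TensorProduct.lmul' k (S := Abar) (ψ z) =
        φ (Algebra.TensorProduct.lmul' B (S := A) z) := by
    intro z
    induction z using TensorProduct.induction_on with
    | zero => simp
    | add z₁ z₂ h₁ h₂ => simp [map_add, h₁, h₂]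
    | tmul x y =>
      rw [hψtmul, Algebra.TensorProduct.lmul'_apply_tmul,
        Algebra.TensorProduct.lmul'_apply_tmul, map_mul]
  have heBar0 : ψ e ∈ RingHom.ker (Algebra.TensorProduct.lmul' k (S := Abar)).toRingHom := by
    have : Algebra.TensorProduct.lmul' B (S := A) e = 0 := heJ
    show Algebra.TensorProduct.lmul' k (S := Abar) (ψ e) = 0
    rw [hψμ, this, map_zero]
  have heBarGen : ∀ a : Abar, ψ e * ((1 : Abar) ⊗ₜ[k] a - a ⊗ₜ[k] (1 : Abar))
      = (1 : Abar) ⊗ₜ[k] a - a ⊗ₜ[k] (1 : Abar) := by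
    intro a
    induction a using TensorProduct.induction_on with
    | zero => simp
    | add a₁ a₂ h₁ h₂ =>
      rw [TensorProduct.tmul_add, TensorProduct.add_tmul, ← sub_add_sub_comm, mul_add, h₁, h₂]
    | tmul x c =>
      have ha : (x ⊗ₜ[B] c : Abar) = c • (φ x) := by
        rw [Algebra.smul_def]
        show _ = ((1 : A) ⊗ₜ[B] c) * (x ⊗ₜ[B] (1 : k))
        rw [Algebra.TensorProduct.tmul_mul_tmul, one_mul, mul_one]
      have hd : (1 : Abar) ⊗ₜ[k] (x ⊗ₜ[B] c : Abar) - (x ⊗ₜ[B] c : Abar) ⊗ₜ[k] (1 : Abar)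
          = c • ((1 : Abar) ⊗ₜ[k] (φ x) - (φ x) ⊗ₜ[k] (1 : Abar)) := by
        rw [ha, smul_sub, TensorProduct.tmul_smul, TensorProduct.smul_tmul',
          TensorProduct.smul_tmul']
      have hdx : (1 : A) ⊗ₜ[B] x - x ⊗ₜ[B] (1 : A) ∈ mulKer B A := by
        show Algebra.TensorProduct.lmul' B (S := A) _ = 0
        rw [map_sub, Algebra.TensorProduct.lmul'_apply_tmul,
          Algebra.TensorProduct.lmul'_apply_tmul, one_mul, mul_one, sub_self]
      have hψd : (1 : Abar) ⊗ₜ[k] (φ x) - (φ x) ⊗ₜ[k] (1 : Abar)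
          = ψ ((1 : A) ⊗ₜ[B] x - x ⊗ₜ[B] (1 : A)) := by
        rw [map_sub, hψtmul, hψtmul, map_one]
      rw [hd, hψd, mul_smul_comm, ← map_mul, hid _ hdx]
  have heBarId := idem_ker_of_gen (ψ e) heBarGen
  letI : Module k N := Module.compHom N (algebraMap k Abar)
  haveI : IsScalarTower k Abar N := ⟨fun c a n => by
    show ((c • a) : Abar) • n = (algebraMap k Abar c) • (a • n)
    rw [Algebra.smul_def, mul_smul]⟩
  obtain ⟨s, hs⟩ := isRelProjective_of_idem (ψ e) heBar0 heBarId N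
  haveI : Module.Free k N := inferInstance
  haveI : Module.Free Abar (Abar ⊗[k] N) := inferInstance
  exact Module.Projective.of_split s (relMul k Abar N) hs

end Fiber

/-!
Statement 19: Let `B` be a noetherian commutative ring and `A` a smooth noetherian
`B`-algebra with `Ω_{A|B} = J/J² = 0`, where `J = ker(μ : A ⊗[B] A → A)` (i.e. the
extension is étale).  Then `gldim(A,B) = 0`, i.e. every `A`-module is `(A,B)`-projective;
moreover every fiber ring `A ⊗[B] k(𝔭)` has global dimension `0`.
-/
theorem etale_relative_gldim_zero
    (B A : Type) [CommRing B] [CommRing A] [Algebra B A]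
    [IsNoetherianRing B] (hsm : PaperSmooth B A)
    (homega : Subsingleton (grPiece B A 1)) :
    relGldim B A = 0 ∧
    (∀ M : RelModule B A, IsRelProjective B A M.carrier) ∧
    (∀ q : PrimeSpectrum B, ringGldim (A ⊗[B] resField B q.asIdeal) = 0) := by
  obtain ⟨hflat, hfin, hlci⟩ := hsm
  haveI := hfin
  haveI : IsNoetherianRing A := essNoetherian B A
  haveI : IsNoetherianRing (A ⊗[B] A) := essNoetherian A (A ⊗[B] A)
  obtain ⟨e, heJ, hid⟩ := Submodule.exists_mem_and_smul_eq_self_of_fg_of_le_smul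
    (mulKer B A) ((mulKer B A).restrictScalars _) (IsNoetherian.noetherian _)
    (mulKer_le_sq B A homega)
  have hid' : ∀ x ∈ mulKer B A, e * x = x := fun x hx => by
    rw [← smul_eq_mul]; exact hid x hx
  have hrel : ∀ M : RelModule B A, IsRelProjective B A M.carrier := fun M =>
    isRelProjective_of_idem e heJ hid' M.carrier
  refine ⟨relGldim_eq_zero B A hrel, hrel, ?_⟩
  intro q
  exact ringGldim_eq_zero _ (fun M =>
    fiber_projective B A (resField B q.asIdeal) e heJ hid' M.carrier)
end
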